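/- Assume (H2) and (H3). Then there exists δ > 0 such that liminf_{|a|→∞} (1/|a|) log φ(a) > δ. -/

import Mathlib

open scoped BigOperators
open Filter

noncomputable section

namespace JumpGenerating

variable {d : ℕ}

/-- Scalar product `a · z` for `a ∈ ℝ^d`, `z ∈ ℤ^d`. -/
def dotZ (a : EuclideanSpace ℝ (Fin d)) (z : Fin d → ℤ) : ℝ := ∑ i, a i * (z i : ℝ)

/-- Scalar product on `ℝ^d`. -/
def dotV (a v : EuclideanSpace ℝ (Fin d)) : ℝ := ∑ i, a i * v i

/-- The jump generating function `φ(a) = ∑_{z ∈ ℤ^d} μ(z) e^{a·z}`. -/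
def phi (μ : (Fin d → ℤ) → ℝ) (a : EuclideanSpace ℝ (Fin d)) : ℝ :=
  ∑' z, μ z * Real.exp (dotZ a z)

/-- (H3): the series defining `φ` converges for every `a ∈ ℝ^d`. -/
def H3 (μ : (Fin d → ℤ) → ℝ) : Prop :=
  ∀ a : EuclideanSpace ℝ (Fin d), Summable fun z => μ z * Real.exp (dotZ a z)

/-- `μ` is a nonnegative measure on `ℤ^d` with `0 < μ(ℤ^d) ≤ 1`. -/
def IsMeasure (μ : (Fin d → ℤ) → ℝ) : Prop :=
  (∀ z, 0 ≤ μ z) ∧ 0 < ∑' z, μ z ∧ ∑' z, μ z ≤ 1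

/-- The filter `‖a‖ → ∞` on `ℝ^d`. -/
def normAtTop (d : ℕ) : Filter (EuclideanSpace ℝ (Fin d)) :=
  comap (fun a : EuclideanSpace ℝ (Fin d) => ‖a‖) atTop

/-- The `n`-step kernel of the homogeneous random walk on `ℤ^d` with step
distribution `μ`. -/
def homN (μ : (Fin d → ℤ) → ℝ) : ℕ → (Fin d → ℤ) → (Fin d → ℤ) → ℝ
  | 0 => fun z z' => if z = z' then 1 else 0
  | n + 1 => fun z z' => ∑' w, homN μ n z w * μ (z' - w)

/-- (H2): the homogeneous random walk with step distribution `μ` is irreducible. -/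
def H2 (μ : (Fin d → ℤ) → ℝ) : Prop := ∀ z z' : Fin d → ℤ, ∃ n, 0 < homN μ n z z'

/-!
Since `φ(a)^n = ∑_z p_n(0, z) e^{a·z}` is the exponential moment of the `n`-step walk, every `z`
reachable in `n` steps gives `log p_n(0, z) + a·z ≤ n log φ(a)`. By irreducibility every `±eᵢ` is
reachable, so `|aᵢ| ≤ K + C log⁺ φ(a)` for each coordinate, and summing over coordinates gives
`‖a‖ ≤ K + C log⁺ φ(a)`: `log φ` grows at least linearly in `‖a‖`.
-/

lemma euclidean_norm_le_sum_abs {ι : Type*} [Fintype ι] (a : EuclideanSpace ℝ ι) :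
    ‖a‖ ≤ ∑ i, |a i| := by
  classical
  calc ‖a‖ = ‖∑ i, EuclideanSpace.single i (a i)‖ := by
        congr 1; ext j; simp
    _ ≤ ∑ i, ‖EuclideanSpace.single i (a i)‖ := norm_sum_le _ _
    _ = ∑ i, |a i| := by simp

lemma dotZ_single (a : EuclideanSpace ℝ (Fin d)) (i : Fin d) : dotZ a (Pi.single i 1) = a i := by
  simp [dotZ, Pi.single_apply]

lemma dotZ_neg (a : EuclideanSpace ℝ (Fin d)) (z : Fin d → ℤ) : dotZ a (-z) = -dotZ a z := by
  simp [dotZ]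

lemma dotZ_add (a : EuclideanSpace ℝ (Fin d)) (z w : Fin d → ℤ) :
    dotZ a (z + w) = dotZ a z + dotZ a w := by
  simp only [dotZ, Pi.add_apply, Int.cast_add, mul_add, Finset.sum_add_distrib]

lemma exists_pos_lt_liminf_div_norm {E : Type*} [SeminormedAddCommGroup E] {f : E → ℝ}
    {K C : ℝ} (hC : 0 < C) (hf : ∀ a, ‖a‖ ≤ K + C * max (f a) 0) :
    ∃ δ : ℝ, 0 < δ ∧ (δ : EReal) <
      liminf (fun a => ((f a / ‖a‖ : ℝ) : EReal)) (comap (fun a : E => ‖a‖) atTop) := by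
  refine ⟨1 / (4 * C), by positivity, ?_⟩
  have hlarge : ∀ᶠ a in comap (fun a : E => ‖a‖) atTop, 2 * |K| + 1 ≤ ‖a‖ :=
    preimage_mem_comap (Ici_mem_atTop _)
  have hev : ∀ᶠ a in comap (fun a : E => ‖a‖) atTop,
      ((1 / (2 * C) : ℝ) : EReal) ≤ ((f a / ‖a‖ : ℝ) : EReal) := by
    filter_upwards [hlarge] with a ha
    have hK : K ≤ |K| := le_abs_self K
    have hnorm : 0 < ‖a‖ := by linarith [abs_nonneg K]
    have hmax : ‖a‖ / 2 ≤ C * max (f a) 0 := by linarith [hf a]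
    have hfa : 0 < f a := by
      by_contra! h
      rw [max_eq_right h, mul_zero] at hmax
      linarith
    rw [max_eq_left hfa.le] at hmax
    rw [EReal.coe_le_coe_iff, div_le_div_iff₀ (by positivity) hnorm]
    linarith
  calc ((1 / (4 * C) : ℝ) : EReal) < ((1 / (2 * C) : ℝ) : EReal) := by
        rw [EReal.coe_lt_coe_iff]; gcongr; linarith
    _ ≤ _ := le_liminf_of_le (by isBoundedDefault) hev

section RandomWalk

variable {μ : (Fin d → ℤ) → ℝ}

lemma homN_nonneg (hμ : ∀ z, 0 ≤ μ z) : ∀ n z z', 0 ≤ homN μ n z z'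
  | 0, z, z' => by simp only [homN]; split_ifs <;> norm_num
  | n + 1, z, _ => tsum_nonneg fun w => mul_nonneg (homN_nonneg hμ n z w) (hμ _)

lemma phi_eq_tsum_shift (z : Fin d → ℤ) (a : EuclideanSpace ℝ (Fin d)) :
    ∑' w, μ (z - w) * Real.exp (dotZ a (z - w)) = phi μ a :=
  (Equiv.subLeft z).tsum_eq fun u => μ u * Real.exp (dotZ a u)

/-- `φ(a)^n = ∑_z p_n(w, z) e^{a·(z-w)}`; only this termwise bound is needed. -/
lemma homN_mul_exp_le_phi_pow (hμ : ∀ z, 0 ≤ μ z) (h3 : H3 μ) (a : EuclideanSpace ℝ (Fin d))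
    (w : Fin d → ℤ) : ∀ n z, homN μ n w z * Real.exp (dotZ a (z - w)) ≤ phi μ a ^ n
  | 0, z => by
      simp only [homN, pow_zero]
      split_ifs with h
      · simp [h, dotZ]
      · simp
  | n + 1, z => by
      have hshift : Summable fun v => μ (z - v) * Real.exp (dotZ a (z - v)) :=
        (Equiv.subLeft z).summable_iff.mpr (h3 a)
      have hterm : ∀ v, homN μ n w v * μ (z - v) * Real.exp (dotZ a (z - w))
          ≤ phi μ a ^ n * (μ (z - v) * Real.exp (dotZ a (z - v))) := fun v =>
        calc homN μ n w v * μ (z - v) * Real.exp (dotZ a (z - w))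
            = homN μ n w v * Real.exp (dotZ a (v - w)) *
                (μ (z - v) * Real.exp (dotZ a (z - v))) := by
              rw [show z - w = (v - w) + (z - v) by abel, dotZ_add, Real.exp_add]
              ring
          _ ≤ phi μ a ^ n * (μ (z - v) * Real.exp (dotZ a (z - v))) :=
              mul_le_mul_of_nonneg_right (homN_mul_exp_le_phi_pow hμ h3 a w n v)
                (mul_nonneg (hμ _) (Real.exp_pos _).le)
      have hsum : Summable fun v => homN μ n w v * μ (z - v) * Real.exp (dotZ a (z - w)) :=
        (hshift.mul_left _).of_nonneg_of_le
          (fun v => by have := homN_nonneg hμ n w v; have := hμ (z - v); positivity) hterm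
      calc homN μ (n + 1) w z * Real.exp (dotZ a (z - w))
          = ∑' v, homN μ n w v * μ (z - v) * Real.exp (dotZ a (z - w)) := tsum_mul_right.symm
        _ ≤ ∑' v, phi μ a ^ n * (μ (z - v) * Real.exp (dotZ a (z - v))) :=
            hsum.tsum_le_tsum hterm (hshift.mul_left _)
        _ = phi μ a ^ (n + 1) := by rw [tsum_mul_left, phi_eq_tsum_shift, pow_succ]

lemma exists_dotZ_le_log_phi (hμ : ∀ z, 0 ≤ μ z) (h2 : H2 μ) (h3 : H3 μ) (z : Fin d → ℤ) :
    ∃ n : ℕ, ∃ K : ℝ, ∀ a, dotZ a z ≤ K + n * max (Real.log (phi μ a)) 0 := by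
  obtain ⟨n, hn⟩ := h2 0 z
  refine ⟨n, -Real.log (homN μ n 0 z), fun a => ?_⟩
  have hbound := homN_mul_exp_le_phi_pow hμ h3 a 0 n z
  rw [sub_zero] at hbound
  have hlog := Real.log_le_log (by positivity) hbound
  rw [Real.log_mul hn.ne' (Real.exp_pos _).ne', Real.log_exp, Real.log_pow] at hlog
  have : (n : ℝ) * Real.log (phi μ a) ≤ n * max (Real.log (phi μ a)) 0 := by
    gcongr; exact le_max_left _ _
  linarith

lemma exists_norm_le_add_mul_log_phi (hμ : ∀ z, 0 ≤ μ z) (h2 : H2 μ) (h3 : H3 μ) :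
    ∃ K C : ℝ, 0 < C ∧ ∀ a, ‖a‖ ≤ K + C * max (Real.log (phi μ a)) 0 := by
  choose nPos KPos hPos using fun i => exists_dotZ_le_log_phi hμ h2 h3 (Pi.single i 1)
  choose nNeg KNeg hNeg using fun i => exists_dotZ_le_log_phi hμ h2 h3 (-Pi.single i 1)
  refine ⟨∑ i, (|KPos i| + |KNeg i|), ∑ i, ((nPos i : ℝ) + nNeg i) + 1, by positivity,
    fun a => ?_⟩
  set M := max (Real.log (phi μ a)) 0
  have hM : 0 ≤ M := le_max_right _ _
  have hcoord : ∀ i, |a i| ≤ (|KPos i| + |KNeg i|) + ((nPos i : ℝ) + nNeg i) * M := by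
    intro i
    have hp := hPos i a
    have hn := hNeg i a
    rw [dotZ_single] at hp
    rw [dotZ_neg, dotZ_single] at hn
    have : 0 ≤ (nPos i : ℝ) * M := by positivity
    have : 0 ≤ (nNeg i : ℝ) * M := by positivity
    exact abs_le'.mpr ⟨by linarith [le_abs_self (KPos i), abs_nonneg (KNeg i)],
      by linarith [le_abs_self (KNeg i), abs_nonneg (KPos i)]⟩
  calc ‖a‖ ≤ ∑ i, |a i| := euclidean_norm_le_sum_abs a
    _ ≤ ∑ i, ((|KPos i| + |KNeg i|) + ((nPos i : ℝ) + nNeg i) * M) :=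
        Finset.sum_le_sum fun i _ => hcoord i
    _ ≤ ∑ i, (|KPos i| + |KNeg i|) + (∑ i, ((nPos i : ℝ) + nNeg i) + 1) * M := by
        rw [Finset.sum_add_distrib, ← Finset.sum_mul]; linarith

end RandomWalk

theorem log_phi_liminf_pos_general {d : ℕ} (μ : (Fin d → ℤ) → ℝ)
    (hμ : IsMeasure μ) (h2 : H2 μ) (h3 : H3 μ) :
    ∃ δ : ℝ, 0 < δ ∧
      (δ : EReal) < liminf
        (fun a : EuclideanSpace ℝ (Fin d) => ((Real.log (phi μ a) / ‖a‖ : ℝ) : EReal))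
        (normAtTop d) := by
  obtain ⟨K, C, hC, hbound⟩ := exists_norm_le_add_mul_log_phi hμ.1 h2 h3
  exact exists_pos_lt_liminf_div_norm hC hbound

/-- under (H2) and (H3), there is `δ > 0` with
`liminf_{|a|→∞} log φ(a)/|a| > δ`. -/
theorem log_phi_liminf_pos {d : ℕ} (hd : 1 ≤ d) (μ : (Fin d → ℤ) → ℝ)
    (hμ : IsMeasure μ) (h2 : H2 μ) (h3 : H3 μ) :
    ∃ δ : ℝ, 0 < δ ∧
      (δ : EReal) < liminf
        (fun a : EuclideanSpace ℝ (Fin d) => ((Real.log (phi μ a) / ‖a‖ : ℝ) : EReal))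
        (normAtTop d) :=
  log_phi_liminf_pos_general μ hμ h2 h3

end JumpGenerating
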